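/- All axioms of IELG are provable in IELG⁻; in particular the sequents Γ, ⊥ ⇒ F and Γ, K⊥ ⇒ F are provable in IELG⁻ for any Γ and F. -/
import Mathlib


inductive Fm : Type
  | var : ℕ → Fm
  | bot : Fm
  | and : Fm → Fm → Fm
  | or  : Fm → Fm → Fm
  | imp : Fm → Fm → Fm
  | K   : Fm → Fm
deriving DecidableEq

/-- ¬F abbreviates F → ⊥. -/
def Fm.neg (F : Fm) : Fm := F.imp .bot

/-- A is a propositional variable or ⊥. -/
def Fm.isAtom (A : Fm) : Prop := A = Fm.bot ∨ ∃ n, A = Fm.var n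

/-- K applied to each member of a multiset. -/
def Kset (Γ : Multiset Fm) : Multiset Fm := Γ.map Fm.K
/-- Depth-indexed cut-free sequent calculus IELG⁻ : `IELGm n Γ F` means the
sequent Γ ⇒ F has an IELG⁻-proof of depth at most n. -/
inductive IELGm : ℕ → Multiset Fm → Fm → Prop
  | ax (n : ℕ) (Γ : Multiset Fm) (A : Fm) : A.isAtom → IELGm n (A ::ₘ Γ) A
  | andL (n : ℕ) (Γ : Multiset Fm) (F G H : Fm) :
      IELGm n (F ::ₘ G ::ₘ Γ) H → IELGm (n+1) (F.and G ::ₘ Γ) H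
  | andR (n : ℕ) (Γ : Multiset Fm) (F G : Fm) :
      IELGm n Γ F → IELGm n Γ G → IELGm (n+1) Γ (F.and G)
  | orL (n : ℕ) (Γ : Multiset Fm) (F G H : Fm) :
      IELGm n (F ::ₘ Γ) H → IELGm n (G ::ₘ Γ) H → IELGm (n+1) (F.or G ::ₘ Γ) H
  | orR1 (n : ℕ) (Γ : Multiset Fm) (F G : Fm) : IELGm n Γ F → IELGm (n+1) Γ (F.or G)
  | orR2 (n : ℕ) (Γ : Multiset Fm) (F G : Fm) : IELGm n Γ G → IELGm (n+1) Γ (F.or G)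
  | impL (n : ℕ) (Γ : Multiset Fm) (F G H : Fm) :
      IELGm n (F.imp G ::ₘ Γ) F → IELGm n (G ::ₘ Γ) H →
      IELGm (n+1) (F.imp G ::ₘ Γ) H
  | impR (n : ℕ) (Γ : Multiset Fm) (F G : Fm) :
      IELGm n (F ::ₘ Γ) G → IELGm (n+1) Γ (F.imp G)
  | KI1 (n : ℕ) (Γ Δ : Multiset Fm) (F : Fm) :
      (∀ G, Fm.K G ∉ Γ) →
      IELGm n (Γ + Kset Δ + Δ) F → IELGm (n+1) (Γ + Kset Δ) (Fm.K F)
  | U (n : ℕ) (Γ : Multiset Fm) (F : Fm) :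
      IELGm n Γ (Fm.K Fm.bot) → IELGm (n+1) Γ F


lemma split_K (Θ : Multiset Fm) :
    ∃ Γ₀ Δ₀, Θ = Γ₀ + Kset Δ₀ ∧ ∀ G, Fm.K G ∉ Γ₀ := by
  induction Θ using Multiset.induction with
  | empty => exact ⟨0, 0, rfl, by simp⟩
  | cons a Θ ih =>
    obtain ⟨Γ₀, Δ₀, h, hK⟩ := ih
    match a with
    | Fm.K b =>
        refine ⟨Γ₀, b ::ₘ Δ₀, ?_, hK⟩
        simp [Kset, h]
    | Fm.var m =>
        exact ⟨Fm.var m ::ₘ Γ₀, Δ₀, by simp [h], by simpa using hK⟩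
    | Fm.bot =>
        exact ⟨Fm.bot ::ₘ Γ₀, Δ₀, by simp [h], by simpa using hK⟩
    | Fm.and b c =>
        exact ⟨Fm.and b c ::ₘ Γ₀, Δ₀, by simp [h], by simpa using hK⟩
    | Fm.or b c =>
        exact ⟨Fm.or b c ::ₘ Γ₀, Δ₀, by simp [h], by simpa using hK⟩
    | Fm.imp b c =>
        exact ⟨Fm.imp b c ::ₘ Γ₀, Δ₀, by simp [h], by simpa using hK⟩

lemma botCtx (Γ : Multiset Fm) (F : Fm) : ∃ n, IELGm n (Fm.bot ::ₘ Γ) F := by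
  obtain ⟨Γ₀, Δ₀, h, hK⟩ := split_K Γ
  refine ⟨2, IELGm.U 1 _ _ ?_⟩
  have h1 : IELGm 0 ((Fm.bot ::ₘ Γ₀) + Kset Δ₀ + Δ₀) Fm.bot := by
    have : (Fm.bot ::ₘ Γ₀) + Kset Δ₀ + Δ₀ = Fm.bot ::ₘ (Γ₀ + Kset Δ₀ + Δ₀) := by
      simp [Multiset.cons_add]
    rw [this]
    exact IELGm.ax 0 _ _ (Or.inl rfl)
  have h2 := IELGm.KI1 0 (Fm.bot ::ₘ Γ₀) Δ₀ Fm.bot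
    (by intro G hG
        rcases Multiset.mem_cons.1 hG with h' | h'
        · exact Fm.noConfusion h'
        · exact hK G h') h1
  have : (Fm.bot ::ₘ Γ₀) + Kset Δ₀ = Fm.bot ::ₘ Γ := by simp [h, Multiset.cons_add]
  rwa [this] at h2

lemma KbotCtx (Γ : Multiset Fm) (F : Fm) : ∃ n, IELGm n (Fm.K Fm.bot ::ₘ Γ) F := by
  obtain ⟨Γ₀, Δ₀, h, hK⟩ := split_K Γ
  refine ⟨2, IELGm.U 1 _ _ ?_⟩
  have h1 : IELGm 0 (Γ₀ + Kset (Fm.bot ::ₘ Δ₀) + (Fm.bot ::ₘ Δ₀)) Fm.bot := by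
    have : Γ₀ + Kset (Fm.bot ::ₘ Δ₀) + (Fm.bot ::ₘ Δ₀)
        = Fm.bot ::ₘ (Γ₀ + Kset (Fm.bot ::ₘ Δ₀) + Δ₀) := by
      simp [Multiset.add_cons]
    rw [this]
    exact IELGm.ax 0 _ _ (Or.inl rfl)
  have h2 := IELGm.KI1 0 Γ₀ (Fm.bot ::ₘ Δ₀) Fm.bot hK h1
  have : Γ₀ + Kset (Fm.bot ::ₘ Δ₀) = Fm.K Fm.bot ::ₘ Γ := by
    simp [Kset, h, Multiset.add_cons]
  rwa [this] at h2

/-- All axioms of IELG are provable in IELG⁻; in particular Γ, ⊥ ⇒ F and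
Γ, K⊥ ⇒ F are provable for any Γ and F. -/
theorem stmt5 :
    (∀ (Γ : Multiset Fm) (A : Fm), A.isAtom → ∃ n, IELGm n (A ::ₘ Γ) A) ∧
    (∀ (Γ : Multiset Fm) (F : Fm), ∃ n, IELGm n (Fm.bot ::ₘ Γ) F) ∧
    (∀ (Γ : Multiset Fm) (F : Fm), ∃ n, IELGm n (Fm.K Fm.bot ::ₘ Γ) F) := by
  refine ⟨fun Γ A h => ⟨0, IELGm.ax 0 Γ A h⟩, botCtx, KbotCtx⟩
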